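/- If g : Ω → ℝ≥0 is measurable and log⁺ g is integrable for a measure-preserving transformation θ, then almost surely limsup_{n→∞} (1/n) log⁺ g(θⁿω) = 0; in particular, for every ε > 0, g(θⁿω) ≤ e^{εn} for all sufficiently large n, almost surely. -/

import Mathlib

/-!
Since `∑ₙ μ {n < X} ≤ 𝔼 X + 1` for integrable `X ≥ 0` and `θ` preserves `μ`, the events
`{ε n < |f (θⁿ ω)|}` have summable probabilities for every `ε > 0`. By Borel–Cantelli, almost
surely `|f (θⁿ ω)| ≤ ε n` eventually, for all `ε = 1/(k+1)` at once, hence `f (θⁿ ω) / n → 0`.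
Applied to `f = log⁺ g`, this gives both the vanishing limsup and `g ≤ exp (log⁺ g) ≤ e^{εn}`.
-/

open MeasureTheory Filter Topology
open scoped ENNReal

section

variable {Ω : Type*} [MeasurableSpace Ω] {μ : Measure Ω}

lemma tsum_measure_natCast_lt_ne_top [IsProbabilityMeasure μ] {X : Ω → ℝ}
    (hX : Integrable X μ) (hX0 : 0 ≤ X) :
    ∑' n : ℕ, μ {ω | (n : ℝ) < X ω} ≠ ∞ := by
  let _ : MeasureSpace Ω := ⟨μ⟩
  exact (ProbabilityTheory.tsum_prob_mem_Ioi_lt_top hX hX0).ne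

namespace MeasureTheory.MeasurePreserving

variable [IsProbabilityMeasure μ] {θ : Ω → Ω} {f : Ω → ℝ}

lemma tsum_measure_mul_lt_abs_comp_iterate_ne_top (hθ : MeasurePreserving θ μ μ)
    (hf : Integrable f μ) {ε : ℝ} (hε : 0 < ε) :
    ∑' n : ℕ, μ {ω | ε * n < |f (θ^[n] ω)|} ≠ ∞ := by
  have hterm (n : ℕ) :
      μ {ω | ε * n < |f (θ^[n] ω)|} = μ {ω | (n : ℝ) < ε⁻¹ * |f ω|} := by
    have hmeas : NullMeasurableSet {ω | ε * n < |f ω|} μ :=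
      nullMeasurableSet_lt aemeasurable_const hf.abs.aemeasurable
    change μ (θ^[n] ⁻¹' {ω | ε * n < |f ω|}) = _
    rw [(hθ.iterate n).measure_preimage hmeas]
    congr 1
    ext ω
    exact (lt_inv_mul_iff₀ hε).symm
  simp_rw [hterm]
  exact tsum_measure_natCast_lt_ne_top (hf.abs.const_mul _)
    fun ω => mul_nonneg (inv_nonneg.2 hε.le) (abs_nonneg _)

lemma ae_eventually_abs_comp_iterate_le (hθ : MeasurePreserving θ μ μ) (hf : Integrable f μ) :
    ∀ᵐ ω ∂μ, ∀ ε : ℝ, 0 < ε → ∀ᶠ n : ℕ in atTop, |f (θ^[n] ω)| ≤ ε * n := by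
  have hrate : ∀ᵐ ω ∂μ, ∀ k : ℕ, ∀ᶠ n : ℕ in atTop,
      |f (θ^[n] ω)| ≤ 1 / ((k : ℝ) + 1) * n := by
    refine ae_all_iff.2 fun k => ?_
    filter_upwards [ae_eventually_notMem
      (hθ.tsum_measure_mul_lt_abs_comp_iterate_ne_top hf (Nat.one_div_pos_of_nat (n := k)))]
      with ω hω
    filter_upwards [hω] with n hn
    simpa using hn
  filter_upwards [hrate] with ω hω ε hε
  obtain ⟨k, hk⟩ := exists_nat_one_div_lt hε
  filter_upwards [hω k] with n hn
  exact hn.trans (mul_le_mul_of_nonneg_right hk.le n.cast_nonneg)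

lemma ae_tendsto_inv_mul_comp_iterate (hθ : MeasurePreserving θ μ μ) (hf : Integrable f μ) :
    ∀ᵐ ω ∂μ, Tendsto (fun n : ℕ => (n : ℝ)⁻¹ * f (θ^[n] ω)) atTop (𝓝 0) := by
  filter_upwards [hθ.ae_eventually_abs_comp_iterate_le hf] with ω hω
  refine Metric.tendsto_nhds.2 fun ε hε => ?_
  filter_upwards [hω (ε / 2) (half_pos hε), eventually_gt_atTop 0] with n hn hn0
  have hn0' : (0 : ℝ) < n := Nat.cast_pos.2 hn0
  rw [Real.dist_eq, sub_zero, abs_mul, abs_inv, Nat.abs_cast, inv_mul_lt_iff₀ hn0']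
  linarith [mul_lt_mul_of_pos_right (half_lt_self hε) hn0']

end MeasureTheory.MeasurePreserving

end

theorem stmt_12_general {Ω : Type*} [MeasurableSpace Ω] (μ : Measure Ω)
    [IsProbabilityMeasure μ] (θ : Ω → Ω) (hθ : MeasurePreserving θ μ μ)
    (g : Ω → ℝ)
    (hint : Integrable (fun ω => max (Real.log (g ω)) 0) μ) :
    ∀ᵐ ω ∂μ,
      limsup (fun n : ℕ => (n : ℝ)⁻¹ * max (Real.log (g (θ^[n] ω))) 0) atTop = 0 ∧
      ∀ ε : ℝ, 0 < ε → ∀ᶠ n : ℕ in atTop, g (θ^[n] ω) ≤ Real.exp (ε * n) := by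
  filter_upwards [hθ.ae_tendsto_inv_mul_comp_iterate hint,
    hθ.ae_eventually_abs_comp_iterate_le hint] with ω hlim hbound
  refine ⟨hlim.limsup_eq, fun ε hε => ?_⟩
  filter_upwards [hbound ε hε] with n hn
  calc g (θ^[n] ω) ≤ Real.exp (Real.log (g (θ^[n] ω))) := Real.le_exp_log _
    _ ≤ Real.exp (ε * n) := Real.exp_le_exp.2 ((le_max_left _ _).trans ((le_abs_self _).trans hn))

/-- If `g : Ω → [0,∞)` is measurable and `log⁺ g` is integrable for a
measure-preserving transformation `θ`, then almost surely
`limsup (1/n) log⁺ g(θⁿω) = 0`; in particular, for every `ε > 0`,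
`g(θⁿω) ≤ e^{εn}` for all sufficiently large `n`, almost surely. -/
theorem stmt_12 {Ω : Type*} [MeasurableSpace Ω] (μ : Measure Ω)
    [IsProbabilityMeasure μ] (θ : Ω → Ω) (hθ : MeasurePreserving θ μ μ)
    (g : Ω → ℝ) (hg : Measurable g) (hg0 : ∀ ω, 0 ≤ g ω)
    (hint : Integrable (fun ω => max (Real.log (g ω)) 0) μ) :
    ∀ᵐ ω ∂μ,
      limsup (fun n : ℕ => (n : ℝ)⁻¹ * max (Real.log (g (θ^[n] ω))) 0) atTop = 0 ∧
      ∀ ε : ℝ, 0 < ε → ∀ᶠ n : ℕ in atTop, g (θ^[n] ω) ≤ Real.exp (ε * n) :=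
  stmt_12_general μ θ hθ g hint
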